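/- arXiv:1509.09311 — 6 statements merged into one kernel-verified Lean document; each statement's English description precedes it below -/
import Mathlib

section
/- For any ideal MHD state, the x-direction entropy potential identity holds: the dot product of the entropy variables with the x-direction physical flux, minus the x-direction entropy flux, equals ρu + ρu‖B⃗‖²/(2p) − ρB₁(u⃗·B⃗)/p; that is, v⃗·f⃗ − F = ρu + ρu‖B⃗‖²/(2p) − ρB₁(u⃗·B⃗)/p. -/
open Real Matrix

/-- An ideal MHD state: density, velocity components, pressure, magnetic field components. -/
structure MHD where
  ρ : ℝ
  u : ℝ
  v : ℝ
  w : ℝ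
  p : ℝ
  B1 : ℝ
  B2 : ℝ
  B3 : ℝ

namespace MHD

noncomputable section

/-- ‖u⃗‖² -/
def uSq (S : MHD) : ℝ := S.u ^ 2 + S.v ^ 2 + S.w ^ 2

/-- ‖B⃗‖² -/
def BSq (S : MHD) : ℝ := S.B1 ^ 2 + S.B2 ^ 2 + S.B3 ^ 2

/-- u⃗·B⃗ -/
def uDotB (S : MHD) : ℝ := S.u * S.B1 + S.v * S.B2 + S.w * S.B3

/-- physical entropy s = ln p − γ ln ρ -/
def ent (γ : ℝ) (S : MHD) : ℝ := Real.log S.p - γ * Real.log S.ρ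

/-- total energy density ρe -/
def rhoE (γ : ℝ) (S : MHD) : ℝ := S.p / (γ - 1) + S.ρ * S.uSq / 2 + S.BSq / 2

/-- entropy density U = −ρs/(γ−1) -/
def entU (γ : ℝ) (S : MHD) : ℝ := -(S.ρ * S.ent γ) / (γ - 1)

/-- x-direction entropy flux F = uU -/
def entF (γ : ℝ) (S : MHD) : ℝ := S.u * S.entU γ

/-- the entropy variables v⃗ = U_q -/
def entVar (γ : ℝ) (S : MHD) : Fin 8 → ℝ :=
  ![(γ - S.ent γ) / (γ - 1) - S.ρ * S.uSq / (2 * S.p),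
    S.ρ * S.u / S.p, S.ρ * S.v / S.p, S.ρ * S.w / S.p,
    -(S.ρ / S.p), S.ρ * S.B1 / S.p, S.ρ * S.B2 / S.p, S.ρ * S.B3 / S.p]

/-- x-direction physical flux f⃗ -/
def fluxX (γ : ℝ) (S : MHD) : Fin 8 → ℝ :=
  ![S.ρ * S.u,
    S.ρ * S.u ^ 2 + S.p + S.BSq / 2 - S.B1 ^ 2,
    S.ρ * S.u * S.v - S.B1 * S.B2,
    S.ρ * S.u * S.w - S.B1 * S.B3,
    S.u * (S.rhoE γ + S.p + S.BSq / 2) - S.B1 * S.uDotB,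
    0,
    S.u * S.B2 - S.v * S.B1,
    S.u * S.B3 - S.w * S.B1]

/-- the parameter vector z -/
def z (S : MHD) : Fin 8 → ℝ :=
  ![Real.sqrt (S.ρ / S.p), Real.sqrt (S.ρ / S.p) * S.u, Real.sqrt (S.ρ / S.p) * S.v,
    Real.sqrt (S.ρ / S.p) * S.w, Real.sqrt (S.ρ * S.p), S.B1, S.B2, S.B3]

end

end MHD

noncomputable section

open MHD

/-- logarithmic mean: (x−y)/(ln x − ln y), with the consistent value x when x = y. -/
def lm (x y : ℝ) : ℝ := if x = y then x else (x - y) / (Real.log x - Real.log y)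

/-- arithmetic mean -/
def am (x y : ℝ) : ℝ := (x + y) / 2

/-- ⟨z_i⟩ (note: `zA L R 0` is ⟨z₁⟩, …, `zA L R 7` is ⟨z₈⟩) -/
def zA (L R : MHD) (i : Fin 8) : ℝ := am (L.z i) (R.z i)

/-- ⟨z_i z_j⟩ -/
def zP (L R : MHD) (i j : Fin 8) : ℝ := am (L.z i * L.z j) (R.z i * R.z j)

/-- ⟨z₁z₂⟩⟨z₆⟩ + ⟨z₁z₃⟩⟨z₇⟩ + ⟨z₁z₄⟩⟨z₈⟩, the x-direction source factor -/
def srcX (L R : MHD) : ℝ :=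
  zP L R 0 1 * zA L R 5 + zP L R 0 2 * zA L R 6 + zP L R 0 3 * zA L R 7

/-- the entropy conserving numerical flux of Theorem 1 (x-direction) -/
def ecFlux (γ : ℝ) (L R : MHD) : Fin 8 → ℝ :=
  ![zA L R 1 * lm (L.z 4) (R.z 4),
    zA L R 4 / zA L R 0 + (zA L R 1) ^ 2 * lm (L.z 4) (R.z 4) / zA L R 0
      + (zP L R 5 5 + zP L R 6 6 + zP L R 7 7) / 2 - zP L R 5 5,
    zA L R 1 * zA L R 2 * lm (L.z 4) (R.z 4) / zA L R 0 - zP L R 5 6,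
    zA L R 1 * zA L R 3 * lm (L.z 4) (R.z 4) / zA L R 0 - zP L R 5 7,
    (γ / (γ - 1)) * (zA L R 1 / zA L R 0) *
        (((γ + 1) / (2 * γ)) * lm (L.z 4) (R.z 4) / lm (L.z 0) (R.z 0)
          + ((γ - 1) / (2 * γ)) * (zA L R 4 / zA L R 0))
      + zA L R 1 * lm (L.z 4) (R.z 4) / 2 *
          ((zA L R 1) ^ 2 + (zA L R 2) ^ 2 + (zA L R 3) ^ 2) / (zA L R 0) ^ 2
      + (zA L R 6 / zP L R 0 0) * (zP L R 0 1 * zA L R 6 - zP L R 0 2 * zA L R 5)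
      + (zA L R 7 / zP L R 0 0) * (zP L R 0 1 * zA L R 7 - zP L R 0 3 * zA L R 5),
    0,
    (zP L R 0 1 * zA L R 6 - zP L R 0 2 * zA L R 5) / zP L R 0 0,
    (zP L R 0 1 * zA L R 7 - zP L R 0 3 * zA L R 5) / zP L R 0 0]

end

set_option maxHeartbeats 2000000 in
/-- the x-direction entropy potential identity
v⃗·f⃗ − F = ρu + ρu‖B⃗‖²/(2p) − ρB₁(u⃗·B⃗)/p. -/
theorem entropy_potential_x (γ : ℝ) (hγ : 1 < γ) (S : MHD) (hρ : 0 < S.ρ) (hp : 0 < S.p) :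
    (∑ i : Fin 8, S.entVar γ i * S.fluxX γ i) - S.entF γ =
      S.ρ * S.u + S.ρ * S.u * S.BSq / (2 * S.p) - S.ρ * S.B1 * S.uDotB / S.p := by
  have hp' := hp.ne'
  have hγ' : γ - 1 ≠ 0 := by linarith
  simp only [Fin.sum_univ_succ, Fin.sum_univ_zero, MHD.entVar, MHD.fluxX, MHD.entF, MHD.entU,
    MHD.rhoE, MHD.ent, MHD.uSq, MHD.BSq, MHD.uDotB, Matrix.cons_val_zero, Matrix.cons_val_succ,
    add_zero]
  field_simp
  ring
end

section
/- Entropy conservation of the EC flux (Theorem 1). Let left and right ideal MHD states be given (both with ρ > 0, p > 0) and define the numerical flux f* ∈ ℝ⁸ componentwise by f₁* = ⟨z₂⟩·z₅ˡⁿ; f₂* = ⟨z₅⟩/⟨z₁⟩ + ⟨z₂⟩²·z₅ˡⁿ/⟨z₁⟩ + (⟨z₆²⟩ + ⟨z₇²⟩ + ⟨z₈²⟩)/2 − ⟨z₆²⟩; f₃* = ⟨z₂⟩⟨z₃⟩·z₅ˡⁿ/⟨z₁⟩ − ⟨z₆z₇⟩; f₄* = ⟨z₂⟩⟨z₄⟩·z₅ˡⁿ/⟨z₁⟩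 − ⟨z₆z₈⟩; f₅* = (γ/(γ−1))·(⟨z₂⟩/⟨z₁⟩)·( ((γ+1)/(2γ))·z₅ˡⁿ/z₁ˡⁿ + ((γ−1)/(2γ))·⟨z₅⟩/⟨z₁⟩ ) + (⟨z₂⟩·z₅ˡⁿ/2)·(⟨z₂⟩² + ⟨z₃⟩² + ⟨z₄⟩²)/⟨z₁⟩² + (⟨z₇⟩/⟨z₁²⟩)·(⟨z₁z₂⟩⟨z₇⟩ − ⟨z₁z₃⟩⟨z₆⟩) + (⟨z₈⟩/⟨z₁²⟩)·(⟨z₁z₂⟩⟨z₈⟩ − ⟨z₁z₄⟩⟨z₆⟩); f₆* = 0; f₇* = (⟨z₁z₂⟩⟨z₇⟩ − ⟨z₁z₃⟩⟨z₆⟩)/⟨z₁²⟩; f₈* = (⟨z₁z₂⟩⟨z₈⟩ − ⟨z₁z₄⟩⟨z₆⟩)/⟨z₁²⟩. Then the discrete entropy conservation condition holds: ⟦v⃗⟧·f* = ⟦ρu⟧ + ⟦ρu‖B⃗‖²/(2p)⟧ − ⟦ρB₁(u⃗·B⃗)/p⟧ + ⟦B₁⟧·(⟨z₁z₂⟩⟨z₆⟩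 + ⟨z₁z₃⟩⟨z₇⟩ + ⟨z₁z₄⟩⟨z₈⟩), where the last term is minus the contribution −⟨Δx v⃗⟩ᵀs of the paper's Janhunen source term discretization. -/
open Real Matrix

/-!
In the parameter vector z every primitive quantity is rational (ρ = z₁z₅, p = z₅/z₁, u = z₂/z₁,
…), and so are the entropy variables except for the terms ln z₁ and ln z₅ coming from the
physical entropy. Their jumps are exactly ⟦z₁⟧/z₁ˡⁿ and ⟦z₅⟧/z₅ˡⁿ, so once the logarithmic means
are treated as independent nonzero quantities, ⟦v⃗⟧·f* and the right-hand side are rational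
functions of the two parameter vectors, z₁ˡⁿ, z₅ˡⁿ and γ, and the claim is an identity between
them.
-/

lemma lm_pos {x y : ℝ} (hx : 0 < x) (hy : 0 < y) : 0 < lm x y := by
  unfold lm
  split_ifs with hxy
  · exact hx
  · rcases lt_or_gt_of_ne hxy with hlt | hgt
    · exact div_pos_of_neg_of_neg (by linarith) (by linarith [Real.log_lt_log hx hlt])
    · exact div_pos (by linarith) (by linarith [Real.log_lt_log hy hgt])

lemma log_sub_log_eq_div_lm {x y : ℝ} (hx : 0 < x) (hy : 0 < y) :
    Real.log y - Real.log x = (y - x) / lm x y := by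
  unfold lm
  split_ifs with hxy
  · simp [hxy]
  · have hlog : Real.log x - Real.log y ≠ 0 :=
      sub_ne_zero.mpr fun h => hxy (Real.log_injOn_pos hx hy h)
    field_simp [sub_ne_zero.mpr hxy]
    ring

namespace MHD

lemma z_five (S : MHD) : S.z 5 = S.B1 := rfl

lemma z_six (S : MHD) : S.z 6 = S.B2 := rfl

lemma z_seven (S : MHD) : S.z 7 = S.B3 := rfl

section

variable {S : MHD} (hρ : 0 < S.ρ) (hp : 0 < S.p)
include hρ hp

lemma z_zero_pos : 0 < S.z 0 := Real.sqrt_pos.mpr (div_pos hρ hp)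

lemma z_four_pos : 0 < S.z 4 := Real.sqrt_pos.mpr (mul_pos hρ hp)

lemma ρ_eq_z : S.ρ = S.z 0 * S.z 4 := by
  change S.ρ = Real.sqrt _ * Real.sqrt _
  rw [← Real.sqrt_mul (div_pos hρ hp).le, show S.ρ / S.p * (S.ρ * S.p) = S.ρ ^ 2 by field_simp,
    Real.sqrt_sq hρ.le]

lemma p_eq_z : S.p = S.z 4 / S.z 0 := by
  have hz0 : S.z 0 ^ 2 = S.ρ / S.p := Real.sq_sqrt (div_pos hρ hp).le
  rw [eq_div_iff (z_zero_pos hρ hp).ne', ← mul_right_inj' (z_zero_pos hρ hp).ne', ← ρ_eq_z hρ hp]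
  field_simp at hz0 ⊢
  linarith

lemma u_eq_z : S.u = S.z 1 / S.z 0 :=
  (mul_div_cancel_left₀ S.u (z_zero_pos hρ hp).ne').symm

lemma v_eq_z : S.v = S.z 2 / S.z 0 :=
  (mul_div_cancel_left₀ S.v (z_zero_pos hρ hp).ne').symm

lemma w_eq_z : S.w = S.z 3 / S.z 0 :=
  (mul_div_cancel_left₀ S.w (z_zero_pos hρ hp).ne').symm

lemma entVar_eq_z {γ : ℝ} (hγ : γ ≠ 1) :
    S.entVar γ =
      ![γ / (γ - 1) + Real.log (S.z 4) + (γ + 1) / (γ - 1) * Real.log (S.z 0)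
          - (S.z 1 ^ 2 + S.z 2 ^ 2 + S.z 3 ^ 2) / 2,
        S.z 0 * S.z 1, S.z 0 * S.z 2, S.z 0 * S.z 3, -S.z 0 ^ 2,
        S.z 0 ^ 2 * S.B1, S.z 0 ^ 2 * S.B2, S.z 0 ^ 2 * S.B3] := by
  have hz0 := (z_zero_pos hρ hp).ne'
  have hz4 := (z_four_pos hρ hp).ne'
  have hγ1 : γ - 1 ≠ 0 := sub_ne_zero.mpr hγ
  unfold entVar ent uSq
  rw [u_eq_z hρ hp, v_eq_z hρ hp, w_eq_z hρ hp, ρ_eq_z hρ hp, p_eq_z hρ hp,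
    Real.log_mul hz0 hz4, Real.log_div hz4 hz0]
  simp only [Matrix.vecCons_inj, and_true]
  refine ⟨?_, ?_, ?_, ?_, ?_, ?_, ?_, ?_⟩ <;> field_simp
  ring

end

lemma entVar_sub_entVar {γ : ℝ} (hγ : γ ≠ 1) {L R : MHD}
    (hρL : 0 < L.ρ) (hpL : 0 < L.p) (hρR : 0 < R.ρ) (hpR : 0 < R.p) :
    R.entVar γ - L.entVar γ =
      ![(R.z 4 - L.z 4) / lm (L.z 4) (R.z 4)
          + (γ + 1) / (γ - 1) * ((R.z 0 - L.z 0) / lm (L.z 0) (R.z 0))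
          - (R.z 1 ^ 2 + R.z 2 ^ 2 + R.z 3 ^ 2 - (L.z 1 ^ 2 + L.z 2 ^ 2 + L.z 3 ^ 2)) / 2,
        R.z 0 * R.z 1 - L.z 0 * L.z 1, R.z 0 * R.z 2 - L.z 0 * L.z 2,
        R.z 0 * R.z 3 - L.z 0 * L.z 3, -(R.z 0 ^ 2 - L.z 0 ^ 2),
        R.z 0 ^ 2 * R.B1 - L.z 0 ^ 2 * L.B1, R.z 0 ^ 2 * R.B2 - L.z 0 ^ 2 * L.B2,
        R.z 0 ^ 2 * R.B3 - L.z 0 ^ 2 * L.B3] := by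
  rw [entVar_eq_z hρL hpL hγ, entVar_eq_z hρR hpR hγ,
    ← log_sub_log_eq_div_lm (z_four_pos hρL hpL) (z_four_pos hρR hpR),
    ← log_sub_log_eq_div_lm (z_zero_pos hρL hpL) (z_zero_pos hρR hpR)]
  simp only [Matrix.cons_sub_cons, Matrix.empty_sub_empty, Matrix.vecCons_inj, and_true, true_and]
  exact ⟨by ring, by ring⟩

end MHD

/-- entropy conservation of the EC flux (Theorem 1):
⟦v⃗⟧·f* = ⟦ρu⟧ + ⟦ρu‖B⃗‖²/(2p)⟧ − ⟦ρB₁(u⃗·B⃗)/p⟧ + ⟦B₁⟧·(⟨z₁z₂⟩⟨z₆⟩ + ⟨z₁z₃⟩⟨z₇⟩ + ⟨z₁z₄⟩⟨z₈⟩). -/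
theorem ec_flux_entropy_conservation (γ : ℝ) (hγ : 1 < γ) (L R : MHD)
    (hρL : 0 < L.ρ) (hpL : 0 < L.p) (hρR : 0 < R.ρ) (hpR : 0 < R.p) :
    (∑ i : Fin 8, (R.entVar γ i - L.entVar γ i) * ecFlux γ L R i) =
      (R.ρ * R.u - L.ρ * L.u)
      + (R.ρ * R.u * R.BSq / (2 * R.p) - L.ρ * L.u * L.BSq / (2 * L.p))
      - (R.ρ * R.B1 * R.uDotB / R.p - L.ρ * L.B1 * L.uDotB / L.p)
      + (R.B1 - L.B1) * srcX L R := by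
  have hL0 := MHD.z_zero_pos hρL hpL
  have hR0 := MHD.z_zero_pos hρR hpR
  have hL4 := MHD.z_four_pos hρL hpL
  have hR4 := MHD.z_four_pos hρR hpR
  have hM1 := (lm_pos hL0 hR0).ne'
  have hM5 := (lm_pos hL4 hR4).ne'
  have hγ1 : γ - 1 ≠ 0 := by linarith
  have hγ0 : γ ≠ 0 := by linarith
  simp only [← Pi.sub_apply (R.entVar γ), MHD.entVar_sub_entVar hγ.ne' hρL hpL hρR hpR,
    Fin.sum_univ_eight, ecFlux, srcX, zA, zP, am, MHD.BSq, MHD.uDotB, Matrix.cons_val,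
    MHD.z_five, MHD.z_six, MHD.z_seven]
  rw [MHD.ρ_eq_z hρL hpL, MHD.ρ_eq_z hρR hpR, MHD.p_eq_z hρL hpL, MHD.p_eq_z hρR hpR,
    MHD.u_eq_z hρL hpL, MHD.u_eq_z hρR hpR, MHD.v_eq_z hρL hpL, MHD.v_eq_z hρR hpR,
    MHD.w_eq_z hρL hpL, MHD.w_eq_z hρR hpR]
  field_simp
  ring
end

section
/- Eigenvector scaling lemma (Barth). Let n ≥ 1, let A be a real n×n matrix that is diagonalizable over ℝ, say A = R·Λ·R⁻¹ with R invertible and Λ diagonal with real entries, and let B be a real symmetric positive definite n×n matrix such that A·B is symmetric. Then there exists a real n×n matrix T which is symmetric, invertible, and commutes with Λ (so T is block diagonal with respect to the eigenspaces of Λ), such that with R̃ = R·T one has B = R̃·R̃ᵀ and A = R̃·Λ·R̃⁻¹; consequently A·B = R̃·Λ·R̃ᵀ. -/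
/-!
Put `M = R⁻¹ B R⁻ᵀ`, which is positive definite since `B` is. Symmetry of `AB = RΛR⁻¹B`
says exactly that `Λ` commutes with `M`, so `Λ` also commutes with the positive square root
`T = √M`, a continuous function of `M`. Then `B = R M Rᵀ = (RT)(RT)ᵀ`, and `RT` still
conjugates `Λ` to `A` because `T` commutes with `Λ`.
-/

open Matrix
open scoped MatrixOrder

namespace Matrix

variable {ι : Type*} [Fintype ι] [DecidableEq ι]

theorem commute_inv_mul_mul_inv_transpose_of_isSymm_mul {R : Type*} [CommRing R]
    {A B P Λ : Matrix ι ι R} (hΛ : Λ.IsSymm) (hP : IsUnit P) (hA : A = P * Λ * P⁻¹)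
    (hB : B.IsSymm) (hAB : (A * B).IsSymm) :
    Commute Λ (P⁻¹ * B * P⁻¹ᵀ) := by
  have hAB' : A * B = B * Aᵀ := by
    simpa only [IsSymm, transpose_mul, hB.eq] using hAB.symm
  have := hP.invertible
  calc Λ * (P⁻¹ * B * P⁻¹ᵀ) = P⁻¹ * (A * B) * P⁻¹ᵀ := by
        simp [hA, Matrix.mul_assoc]
    _ = P⁻¹ * B * P⁻¹ᵀ * Λ := by
        rw [hAB', hA]
        simp [transpose_mul, hΛ.eq, Matrix.mul_assoc, ← transpose_mul P⁻¹]

theorem PosDef.exists_isSymm_isUnit_mul_self_eq_of_commute {M C : Matrix ι ι ℝ}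
    (hM : M.PosDef) (hC : Commute C M) :
    ∃ T : Matrix ι ι ℝ, T.IsSymm ∧ IsUnit T ∧ T * T = M ∧ Commute T C := by
  refine ⟨CFC.sqrt M, ?_, ?_, CFC.sqrt_mul_sqrt_self M hM.posSemidef.nonneg, ?_⟩
  · exact (CFC.sqrt_nonneg M).posSemidef.isHermitian
  · exact CFC.isUnit_sqrt_iff_isStrictlyPositive.mpr hM.isStrictlyPositive
  · rw [CFC.sqrt_eq_cfc]
    exact hC.symm.cfc_nnreal _

end Matrix

theorem eigenvector_scaling_general (n : ℕ)
    (A B R Λ : Matrix (Fin n) (Fin n) ℝ)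
    (hΛ : Λ.IsDiag) (hR : IsUnit R) (hA : A = R * Λ * R⁻¹)
    (hB : B.PosDef) (hAB : (A * B).IsSymm) :
    ∃ T : Matrix (Fin n) (Fin n) ℝ, T.IsSymm ∧ IsUnit T ∧ T * Λ = Λ * T ∧
      B = (R * T) * (R * T)ᵀ ∧ A = (R * T) * Λ * (R * T)⁻¹ ∧
      A * B = (R * T) * Λ * (R * T)ᵀ := by
  have hM : (R⁻¹ * B * R⁻¹ᵀ).PosDef :=
    (isUnit_nonsing_inv_iff.mpr hR).posDef_star_right_conjugate_iff.mpr hB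
  obtain ⟨T, hT, hTu, hTT, hTΛ⟩ := hM.exists_isSymm_isUnit_mul_self_eq_of_commute
    (commute_inv_mul_mul_inv_transpose_of_isSymm_mul hΛ.isSymm hR hA hB.isHermitian hAB)
  have := hR.invertible
  have := hTu.invertible
  have hB' : B = (R * T) * (R * T)ᵀ := by
    rw [transpose_mul, hT.eq, Matrix.mul_assoc, ← Matrix.mul_assoc T T, hTT]
    simp [Matrix.mul_assoc, ← transpose_mul]
  have hA' : A = (R * T) * Λ * (R * T)⁻¹ := by
    rw [hA, Matrix.mul_inv_rev, Matrix.mul_assoc R T, hTΛ.eq]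
    simp [Matrix.mul_assoc]
  refine ⟨T, hT, hTu, hTΛ.eq, hB', hA', ?_⟩
  have := hR.mul hTu |>.invertible
  rw [hA', hB', Matrix.mul_assoc, inv_mul_cancel_left_of_invertible]

/-- eigenvector scaling lemma (Barth). If A = RΛR⁻¹ is diagonalizable over ℝ,
B is symmetric positive definite and AB is symmetric, then there is a symmetric invertible
matrix T commuting with Λ (hence block diagonal w.r.t. the eigenspaces of Λ) such that with
R̃ = RT one has B = R̃R̃ᵀ, A = R̃ΛR̃⁻¹ and consequently AB = R̃ΛR̃ᵀ. -/
theorem eigenvector_scaling (n : ℕ) (hn : 1 ≤ n)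
    (A B R Λ : Matrix (Fin n) (Fin n) ℝ)
    (hΛ : Λ.IsDiag) (hR : IsUnit R) (hA : A = R * Λ * R⁻¹)
    (hB : B.PosDef) (hAB : (A * B).IsSymm) :
    ∃ T : Matrix (Fin n) (Fin n) ℝ, T.IsSymm ∧ IsUnit T ∧ T * Λ = Λ * T ∧
      B = (R * T) * (R * T)ᵀ ∧ A = (R * T) * Λ * (R * T)⁻¹ ∧
      A * B = (R * T) * Λ * (R * T)ᵀ :=
  eigenvector_scaling_general n A B R Λ hΛ hR hA hB hAB
end

section
/- The entropy Jacobian H of the ideal MHD system is symmetric positive definite: for every ideal MHD state with ρ > 0, p > 0, and γ > 1, the 8×8 matrix H defined below is symmetric, and xᵀHx > 0 for every nonzero x ∈ ℝ⁸. -/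
open Real Matrix

namespace MHD

noncomputable section

/-- Ĥ = a²/(γ−1) + ‖u⃗‖²/2 with a² = γp/ρ -/
def Hh (γ : ℝ) (S : MHD) : ℝ := (γ * S.p / S.ρ) / (γ - 1) + S.uSq / 2

/-- the entropy Jacobian matrix H -/
def Hmat (γ : ℝ) (S : MHD) : Matrix (Fin 8) (Fin 8) ℝ :=
  Matrix.of
    ![![S.ρ, S.ρ * S.u, S.ρ * S.v, S.ρ * S.w, S.rhoE γ - S.BSq / 2, 0, 0, 0],
      ![S.ρ * S.u, S.ρ * S.u ^ 2 + S.p, S.ρ * S.u * S.v, S.ρ * S.u * S.w,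
        S.ρ * S.Hh γ * S.u, 0, 0, 0],
      ![S.ρ * S.v, S.ρ * S.u * S.v, S.ρ * S.v ^ 2 + S.p, S.ρ * S.v * S.w,
        S.ρ * S.Hh γ * S.v, 0, 0, 0],
      ![S.ρ * S.w, S.ρ * S.u * S.w, S.ρ * S.v * S.w, S.ρ * S.w ^ 2 + S.p,
        S.ρ * S.Hh γ * S.w, 0, 0, 0],
      ![S.rhoE γ - S.BSq / 2, S.ρ * S.Hh γ * S.u, S.ρ * S.Hh γ * S.v, S.ρ * S.Hh γ * S.w,
        S.ρ * (S.Hh γ) ^ 2 - (γ * S.p / S.ρ) * S.p / (γ - 1) + (γ * S.p / S.ρ) * S.BSq / γ,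
        S.p * S.B1 / S.ρ, S.p * S.B2 / S.ρ, S.p * S.B3 / S.ρ],
      ![0, 0, 0, 0, S.p * S.B1 / S.ρ, S.p / S.ρ, 0, 0],
      ![0, 0, 0, 0, S.p * S.B2 / S.ρ, 0, S.p / S.ρ, 0],
      ![0, 0, 0, 0, S.p * S.B3 / S.ρ, 0, 0, S.p / S.ρ]]

end

end MHD

/-!
Completing squares in `xᵀ H x` factors the entropy Jacobian as `H = Tᵀ D T`, where `T` is a
unipotent shear and `D = diag(ρ, p, p, p, p²/(ρ(γ-1)), p/ρ, p/ρ, p/ρ)`. For `ρ, p > 0` and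
`γ > 1` the weights are positive, so `D` is positive definite, and a congruence by the
invertible `T` preserves positive definiteness.
-/

namespace MHD

noncomputable section

def entropyShear (γ : ℝ) (S : MHD) : Matrix (Fin 8) (Fin 8) ℝ :=
  !![1, S.u, S.v, S.w, S.p / (S.ρ * (γ - 1)) + S.uSq / 2, 0, 0, 0;
     0, 1, 0, 0, S.u, 0, 0, 0;
     0, 0, 1, 0, S.v, 0, 0, 0;
     0, 0, 0, 1, S.w, 0, 0, 0;
     0, 0, 0, 0, 1, 0, 0, 0;
     0, 0, 0, 0, S.B1, 1, 0, 0;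
     0, 0, 0, 0, S.B2, 0, 1, 0;
     0, 0, 0, 0, S.B3, 0, 0, 1]

def entropyShearInv (γ : ℝ) (S : MHD) : Matrix (Fin 8) (Fin 8) ℝ :=
  !![1, -S.u, -S.v, -S.w, S.uSq / 2 - S.p / (S.ρ * (γ - 1)), 0, 0, 0;
     0, 1, 0, 0, -S.u, 0, 0, 0;
     0, 0, 1, 0, -S.v, 0, 0, 0;
     0, 0, 0, 1, -S.w, 0, 0, 0;
     0, 0, 0, 0, 1, 0, 0, 0;
     0, 0, 0, 0, -S.B1, 1, 0, 0;
     0, 0, 0, 0, -S.B2, 0, 1, 0;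
     0, 0, 0, 0, -S.B3, 0, 0, 1]

def entropyWeights (γ : ℝ) (S : MHD) : Fin 8 → ℝ :=
  ![S.ρ, S.p, S.p, S.p, S.p ^ 2 / (S.ρ * (γ - 1)), S.p / S.ρ, S.p / S.ρ, S.p / S.ρ]

lemma entropyShearInv_mul_entropyShear (γ : ℝ) (S : MHD) :
    entropyShearInv γ S * entropyShear γ S = 1 := by
  ext i j
  fin_cases i <;> fin_cases j <;>
    simp [entropyShearInv, entropyShear, mul_apply, Fin.sum_univ_eight, uSq]
  all_goals ring

lemma entropyShear_mulVec_injective (γ : ℝ) (S : MHD) :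
    Function.Injective (entropyShear γ S).mulVec :=
  Function.LeftInverse.injective (g := (entropyShearInv γ S).mulVec) fun x => by
    rw [mulVec_mulVec, entropyShearInv_mul_entropyShear, one_mulVec]

lemma posDef_diagonal_entropyWeights {γ : ℝ} (hγ : 1 < γ) {S : MHD} (hρ : 0 < S.ρ)
    (hp : 0 < S.p) : (diagonal (entropyWeights γ S)).PosDef := by
  have : 0 < γ - 1 := sub_pos.mpr hγ
  refine posDef_diagonal_iff.mpr fun i => ?_
  fin_cases i <;> simp [entropyWeights] <;> positivity

lemma Hmat_eq_transpose_mul_diagonal_mul {γ : ℝ} (hγ : 1 < γ) {S : MHD} (hρ : S.ρ ≠ 0) :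
    Hmat γ S = (entropyShear γ S)ᵀ * diagonal (entropyWeights γ S) * entropyShear γ S := by
  have : γ - 1 ≠ 0 := by linarith
  have : γ ≠ 0 := by linarith
  ext i j
  rw [mul_apply]
  simp only [mul_diagonal, transpose_apply, Fin.sum_univ_eight]
  fin_cases i <;> fin_cases j
  all_goals simp only [Hmat, entropyShear, entropyWeights, rhoE, Hh, uSq, BSq, of_apply,
    Fin.reduceFinMk, cons_val]
  all_goals field_simp
  all_goals ring

lemma posDef_Hmat {γ : ℝ} (hγ : 1 < γ) {S : MHD} (hρ : 0 < S.ρ) (hp : 0 < S.p) :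
    (Hmat γ S).PosDef := by
  rw [Hmat_eq_transpose_mul_diagonal_mul hγ hρ.ne', ← conjTranspose_eq_transpose_of_trivial]
  exact (posDef_diagonal_entropyWeights hγ hρ hp).conjTranspose_mul_mul_same
    (entropyShear_mulVec_injective γ S)

end

end MHD

open MHD Matrix in
/-- the entropy Jacobian H of the ideal MHD system is symmetric positive
definite: H is symmetric and xᵀHx > 0 for every nonzero x ∈ ℝ⁸. -/
theorem entropy_jacobian_posdef (γ : ℝ) (hγ : 1 < γ) (S : MHD) (hρ : 0 < S.ρ)
    (hp : 0 < S.p) :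
    (Hmat γ S).IsSymm ∧
      ∀ x : Fin 8 → ℝ, x ≠ 0 → 0 < dotProduct x ((Hmat γ S).mulVec x) := by
  have hH := posDef_Hmat hγ hρ hp
  exact ⟨isHermitian_iff_isSymm.mp hH.isHermitian,
    fun x hx => by simpa using hH.dotProduct_mulVec_pos hx⟩
end

section
/- Entropy potential identities in the y- and z-directions. For any ideal MHD state, v⃗·g⃗ − G = ρv + ρv‖B⃗‖²/(2p) − ρB₂(u⃗·B⃗)/p and v⃗·h⃗ − H = ρw + ρw‖B⃗‖²/(2p) − ρB₃(u⃗·B⃗)/p, where g⃗ and h⃗ are the y- and z-direction physical fluxes, and G = vU and H = wU are the corresponding entropy fluxes. -/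
open Real Matrix

namespace MHD

noncomputable section

/-- y-direction physical flux g⃗ -/
def fluxY (γ : ℝ) (S : MHD) : Fin 8 → ℝ :=
  ![S.ρ * S.v,
    S.ρ * S.u * S.v - S.B1 * S.B2,
    S.ρ * S.v ^ 2 + S.p + S.BSq / 2 - S.B2 ^ 2,
    S.ρ * S.v * S.w - S.B2 * S.B3,
    S.v * (S.rhoE γ + S.p + S.BSq / 2) - S.B2 * S.uDotB,
    S.v * S.B1 - S.u * S.B2,
    0,
    S.v * S.B3 - S.w * S.B2]

/-- z-direction physical flux h⃗ -/
def fluxZ (γ : ℝ) (S : MHD) : Fin 8 → ℝ :=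
  ![S.ρ * S.w,
    S.ρ * S.u * S.w - S.B1 * S.B3,
    S.ρ * S.v * S.w - S.B2 * S.B3,
    S.ρ * S.w ^ 2 + S.p + S.BSq / 2 - S.B3 ^ 2,
    S.w * (S.rhoE γ + S.p + S.BSq / 2) - S.B3 * S.uDotB,
    S.w * S.B1 - S.u * S.B3,
    S.w * S.B2 - S.v * S.B3,
    0]

/-- y-direction entropy flux G = vU -/
def entG (γ : ℝ) (S : MHD) : ℝ := S.v * S.entU γ

/-- z-direction entropy flux H = wU -/
def entH (γ : ℝ) (S : MHD) : ℝ := S.w * S.entU γ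

end

end MHD

open MHD in
/-- entropy potential identities in the y- and z-directions:
v⃗·g⃗ − G = ρv + ρv‖B⃗‖²/(2p) − ρB₂(u⃗·B⃗)/p and
v⃗·h⃗ − H = ρw + ρw‖B⃗‖²/(2p) − ρB₃(u⃗·B⃗)/p. -/
theorem entropy_potential_y_z (γ : ℝ) (hγ : 1 < γ) (S : MHD) (hρ : 0 < S.ρ) (hp : 0 < S.p) :
    (∑ i : Fin 8, S.entVar γ i * S.fluxY γ i) - S.entG γ =
      S.ρ * S.v + S.ρ * S.v * S.BSq / (2 * S.p) - S.ρ * S.B2 * S.uDotB / S.p ∧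
    (∑ i : Fin 8, S.entVar γ i * S.fluxZ γ i) - S.entH γ =
      S.ρ * S.w + S.ρ * S.w * S.BSq / (2 * S.p) - S.ρ * S.B3 * S.uDotB / S.p := by
  have h1 : γ - 1 ≠ 0 := by linarith
  have hp' := hp.ne'
  constructor
  · simp [Fin.sum_univ_succ, entVar, fluxY, entG, entU, ent, rhoE, uSq, BSq, uDotB]
    field_simp
    ring
  · simp [Fin.sum_univ_succ, entVar, fluxZ, entH, entU, ent, rhoE, uSq, BSq, uDotB]
    field_simp
    ring
end

section
/- Entropy conservation of the entropy and kinetic energy conserving (EKEC) flux (appendix Corollary). Let left and right ideal MHD states be given (both with ρ > 0, p > 0), set β = ρ/(2p) for each state, and define f* ∈ ℝ⁸ by f₁* = ρˡⁿ⟨u⟩; f₂* = ρˡⁿ⟨u⟩² + ⟨ρ⟩/(2⟨β⟩) + (⟨B₁²⟩+⟨B₂²⟩+⟨B₃²⟩)/2 − ⟨B₁²⟩; f₃* = ρˡⁿ⟨u⟩⟨v⟩ − ⟨B₁B₂⟩; f₄* = ρˡⁿ⟨u⟩⟨w⟩ − ⟨B₁B₃⟩; f₅* = ρˡⁿ⟨u⟩/(2(γ−1)βˡⁿ)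 + ⟨ρ⟩⟨u⟩/(2⟨β⟩) − (1/2)ρˡⁿ⟨u⟩(⟨u²⟩+⟨v²⟩+⟨w²⟩) + ρˡⁿ⟨u⟩(⟨u⟩²+⟨v⟩²+⟨w⟩²) + (⟨B₂⟩/⟨β⟩)(⟨βu⟩⟨B₂⟩ − ⟨βv⟩⟨B₁⟩) + (⟨B₃⟩/⟨β⟩)(⟨βu⟩⟨B₃⟩ − ⟨βw⟩⟨B₁⟩); f₆* = 0; f₇* = (⟨βu⟩⟨B₂⟩ − ⟨βv⟩⟨B₁⟩)/⟨β⟩; f₈* = (⟨βu⟩⟨B₃⟩ − ⟨βw⟩⟨B₁⟩)/⟨β⟩. Then the discrete entropy conservation condition holds: ⟦v⃗⟧·f* = ⟦ρu⟧ + ⟦βu‖B⃗‖²⟧ − 2⟦βB₁(u⃗·B⃗)⟧ + 2⟦B₁⟧·(⟨βu⟩⟨B₁⟩ + ⟨βv⟩⟨B₂⟩ + ⟨βw⟩⟨B₃⟩), where the last term is minus the contribution of the paper's Janhunen source term discretization. -/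
open Real Matrix

namespace MHD

noncomputable section

/-- the inverse temperature β = ρ/(2p) -/
def βt (S : MHD) : ℝ := S.ρ / (2 * S.p)

/-- the entropy variables written in terms of β -/
def entVarβ (γ : ℝ) (S : MHD) : Fin 8 → ℝ :=
  ![(γ - S.ent γ) / (γ - 1) - S.βt * S.uSq,
    2 * S.βt * S.u, 2 * S.βt * S.v, 2 * S.βt * S.w, -(2 * S.βt),
    2 * S.βt * S.B1, 2 * S.βt * S.B2, 2 * S.βt * S.B3]

end

end MHD

noncomputable section

open MHD

/-- the entropy and kinetic energy conserving (EKEC) numerical flux (appendix Corollary) -/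
def ekecFlux (γ : ℝ) (L R : MHD) : Fin 8 → ℝ :=
  let ρln := lm L.ρ R.ρ
  let βln := lm L.βt R.βt
  let au := am L.u R.u
  let av := am L.v R.v
  let aw := am L.w R.w
  let aρ := am L.ρ R.ρ
  let aβ := am L.βt R.βt
  let aB1 := am L.B1 R.B1
  let aB2 := am L.B2 R.B2
  let aB3 := am L.B3 R.B3
  let aβu := am (L.βt * L.u) (R.βt * R.u)
  let aβv := am (L.βt * L.v) (R.βt * R.v)
  let aβw := am (L.βt * L.w) (R.βt * R.w)
  ![ρln * au,
    ρln * au ^ 2 + aρ / (2 * aβ)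
      + (am (L.B1 ^ 2) (R.B1 ^ 2) + am (L.B2 ^ 2) (R.B2 ^ 2) + am (L.B3 ^ 2) (R.B3 ^ 2)) / 2
      - am (L.B1 ^ 2) (R.B1 ^ 2),
    ρln * au * av - am (L.B1 * L.B2) (R.B1 * R.B2),
    ρln * au * aw - am (L.B1 * L.B3) (R.B1 * R.B3),
    ρln * au / (2 * (γ - 1) * βln) + aρ * au / (2 * aβ)
      - (1 / 2) * ρln * au * (am (L.u ^ 2) (R.u ^ 2) + am (L.v ^ 2) (R.v ^ 2)
          + am (L.w ^ 2) (R.w ^ 2))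
      + ρln * au * (au ^ 2 + av ^ 2 + aw ^ 2)
      + (aB2 / aβ) * (aβu * aB2 - aβv * aB1) + (aB3 / aβ) * (aβu * aB3 - aβw * aB1),
    0,
    (aβu * aB2 - aβv * aB1) / aβ,
    (aβu * aB3 - aβw * aB1) / aβ]

end

lemma lm_ne_zero {x y : ℝ} (hx : 0 < x) (hy : 0 < y) : lm x y ≠ 0 := by
  unfold lm
  split_ifs with h
  · exact hx.ne'
  · exact div_ne_zero (sub_ne_zero.2 h)
      (sub_ne_zero.2 fun hl => h (Real.log_injOn_pos (Set.mem_Ioi.2 hx) (Set.mem_Ioi.2 hy) hl))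

lemma lm_key {x y : ℝ} (hx : 0 < x) (hy : 0 < y) :
    y - x = lm x y * (Real.log y - Real.log x) := by
  unfold lm
  split_ifs with h
  · simp [h]
  · have hl : Real.log x ≠ Real.log y :=
      fun hl => h (Real.log_injOn_pos (Set.mem_Ioi.2 hx) (Set.mem_Ioi.2 hy) hl)
    field_simp [sub_ne_zero.2 hl]
    ring

lemma log_eq_of_lm {x y : ℝ} (hx : 0 < x) (hy : 0 < y) :
    Real.log y = Real.log x + (y - x) / lm x y := by
  rw [lm_key hx hy, mul_div_cancel_left₀ _ (lm_ne_zero hx hy)]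
  ring

set_option maxHeartbeats 4000000 in
open MHD in
/-- discrete entropy conservation of the EKEC flux:
⟦v⃗⟧·f* = ⟦ρu⟧ + ⟦βu‖B⃗‖²⟧ − 2⟦βB₁(u⃗·B⃗)⟧ + 2⟦B₁⟧·(⟨βu⟩⟨B₁⟩ + ⟨βv⟩⟨B₂⟩ + ⟨βw⟩⟨B₃⟩). -/
theorem ekec_flux_entropy_conservation (γ : ℝ) (hγ : 1 < γ) (L R : MHD)
    (hρL : 0 < L.ρ) (hpL : 0 < L.p) (hρR : 0 < R.ρ) (hpR : 0 < R.p) :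
    (∑ i : Fin 8, (R.entVarβ γ i - L.entVarβ γ i) * ekecFlux γ L R i) =
      (R.ρ * R.u - L.ρ * L.u)
      + (R.βt * R.u * R.BSq - L.βt * L.u * L.BSq)
      - 2 * (R.βt * R.B1 * R.uDotB - L.βt * L.B1 * L.uDotB)
      + 2 * (R.B1 - L.B1) *
          (am (L.βt * L.u) (R.βt * R.u) * am L.B1 R.B1
            + am (L.βt * L.v) (R.βt * R.v) * am L.B2 R.B2
            + am (L.βt * L.w) (R.βt * R.w) * am L.B3 R.B3) := by
  have hbL : 0 < L.βt := div_pos hρL (by positivity)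
  have hbR : 0 < R.βt := div_pos hρR (by positivity)
  have hlρ : lm L.ρ R.ρ ≠ 0 := lm_ne_zero hρL hρR
  have hlβ : lm L.βt R.βt ≠ 0 := lm_ne_zero hbL hbR
  have haβ : L.βt + R.βt ≠ 0 := by positivity
  have hγ' : γ - 1 ≠ 0 := sub_ne_zero.2 hγ.ne'
  have hpLlog : Real.log L.p = Real.log L.ρ - Real.log 2 - Real.log L.βt := by
    have : Real.log L.βt = Real.log L.ρ - (Real.log 2 + Real.log L.p) := by
      rw [MHD.βt, Real.log_div hρL.ne' (by positivity), Real.log_mul two_ne_zero hpL.ne']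
    linarith
  have hpRlog : Real.log R.p = Real.log R.ρ - Real.log 2 - Real.log R.βt := by
    have : Real.log R.βt = Real.log R.ρ - (Real.log 2 + Real.log R.p) := by
      rw [MHD.βt, Real.log_div hρR.ne' (by positivity), Real.log_mul two_ne_zero hpR.ne']
    linarith
  have hRρ := log_eq_of_lm hρL hρR
  have hRβ := log_eq_of_lm hbL hbR
  have keySmall :
      (((γ - (Real.log R.p - γ * Real.log R.ρ)) / (γ - 1)
          - R.βt * (R.u ^ 2 + R.v ^ 2 + R.w ^ 2))
        - ((γ - (Real.log L.p - γ * Real.log L.ρ)) / (γ - 1)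
          - L.βt * (L.u ^ 2 + L.v ^ 2 + L.w ^ 2)))
          * (lm L.ρ R.ρ * ((L.u + R.u) / 2))
      + (-(2 * R.βt) - -(2 * L.βt))
          * (lm L.ρ R.ρ * ((L.u + R.u) / 2) / (2 * (γ - 1) * lm L.βt R.βt)) =
      (R.ρ - L.ρ) * ((L.u + R.u) / 2)
        - (R.βt * (R.u ^ 2 + R.v ^ 2 + R.w ^ 2) - L.βt * (L.u ^ 2 + L.v ^ 2 + L.w ^ 2))
          * (lm L.ρ R.ρ * ((L.u + R.u) / 2)) := by
    rw [hpLlog, hpRlog, hRρ, hRβ]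
    field_simp
    ring
  simp only [Fin.sum_univ_succ, Finset.univ_eq_empty, Finset.sum_empty, add_zero,
    Matrix.cons_val_zero, Matrix.cons_val_succ, ekecFlux, MHD.entVarβ, MHD.ent, MHD.BSq,
    MHD.uSq, MHD.uDotB, am]
  trans ((R.ρ - L.ρ) * ((L.u + R.u) / 2)
      - (R.βt * (R.u ^ 2 + R.v ^ 2 + R.w ^ 2) - L.βt * (L.u ^ 2 + L.v ^ 2 + L.w ^ 2))
        * (lm L.ρ R.ρ * ((L.u + R.u) / 2))
    + (2 * R.βt * R.u - 2 * L.βt * L.u)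
        * (lm L.ρ R.ρ * ((L.u + R.u) / 2) ^ 2
          + ((L.ρ + R.ρ) / 2) / (2 * ((L.βt + R.βt) / 2))
          + (((L.B1 ^ 2 + R.B1 ^ 2) / 2) + ((L.B2 ^ 2 + R.B2 ^ 2) / 2)
              + ((L.B3 ^ 2 + R.B3 ^ 2) / 2)) / 2
          - (L.B1 ^ 2 + R.B1 ^ 2) / 2)
    + (2 * R.βt * R.v - 2 * L.βt * L.v)
        * (lm L.ρ R.ρ * ((L.u + R.u) / 2) * ((L.v + R.v) / 2)
          - (L.B1 * L.B2 + R.B1 * R.B2) / 2)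
    + (2 * R.βt * R.w - 2 * L.βt * L.w)
        * (lm L.ρ R.ρ * ((L.u + R.u) / 2) * ((L.w + R.w) / 2)
          - (L.B1 * L.B3 + R.B1 * R.B3) / 2)
    + (-(2 * R.βt) - -(2 * L.βt))
        * (((L.ρ + R.ρ) / 2) * ((L.u + R.u) / 2) / (2 * ((L.βt + R.βt) / 2))
          - (1 / 2) * lm L.ρ R.ρ * ((L.u + R.u) / 2)
              * ((L.u ^ 2 + R.u ^ 2) / 2 + (L.v ^ 2 + R.v ^ 2) / 2
                + (L.w ^ 2 + R.w ^ 2) / 2)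
          + lm L.ρ R.ρ * ((L.u + R.u) / 2)
              * (((L.u + R.u) / 2) ^ 2 + ((L.v + R.v) / 2) ^ 2 + ((L.w + R.w) / 2) ^ 2)
          + (((L.B2 + R.B2) / 2) / ((L.βt + R.βt) / 2))
              * (((L.βt * L.u + R.βt * R.u) / 2) * ((L.B2 + R.B2) / 2)
                - ((L.βt * L.v + R.βt * R.v) / 2) * ((L.B1 + R.B1) / 2))
          + (((L.B3 + R.B3) / 2) / ((L.βt + R.βt) / 2))
              * (((L.βt * L.u + R.βt * R.u) / 2) * ((L.B3 + R.B3) / 2)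
                - ((L.βt * L.w + R.βt * R.w) / 2) * ((L.B1 + R.B1) / 2)))
    + (2 * R.βt * R.B2 - 2 * L.βt * L.B2)
        * ((((L.βt * L.u + R.βt * R.u) / 2) * ((L.B2 + R.B2) / 2)
            - ((L.βt * L.v + R.βt * R.v) / 2) * ((L.B1 + R.B1) / 2))
          / ((L.βt + R.βt) / 2))
    + (2 * R.βt * R.B3 - 2 * L.βt * L.B3)
        * ((((L.βt * L.u + R.βt * R.u) / 2) * ((L.B3 + R.B3) / 2)
            - ((L.βt * L.w + R.βt * R.w) / 2) * ((L.B1 + R.B1) / 2))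
          / ((L.βt + R.βt) / 2)))
  · linear_combination keySmall
  · field_simp
    ring
end
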